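/- arXiv:1602.08975 — 4 statements merged into one kernel-verified Lean document; each statement's English description precedes it below -/
import Mathlib

section
/- Let L >= 2 be a natural number and define f_L(t) = cos(π(t − 1/(2L))) / cos(π/(2L)). Then f_L is band-limited to [−π, π], |f_L(l/L)| <= 1 for every l ∈ ℤ, and f_L(1/(2L)) = 1/cos(π/(2L)). In particular the bound sup|f| <= (1/cos(π/(2L))) sup_l |f(l/L)| over functions band-limited to [−π,π] is attained (with equality) for integer oversampling factors L. -/
open MeasureTheory Real Set
open scoped ENNReal NNReal

/-- Fourier transform with angular-frequency convention `ĝ(ω) = ∫ g(t) e^{-iωt} dt`. -/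
noncomputable def FT (g : ℝ → ℂ) (ω : ℝ) : ℂ :=
  ∫ t : ℝ, g t * Complex.exp (-(Complex.I * ω * t))

/-- `f` is band-limited to `[-B, B]`: continuous, bounded, and its distributional
Fourier transform is supported in `[-B, B]`. -/
def BandLimited (B : ℝ) (f : ℝ → ℂ) : Prop :=
  Continuous f ∧ (∃ C : ℝ, ∀ t : ℝ, ‖f t‖ ≤ C) ∧
  ∀ φ : SchwartzMap ℝ ℂ,
    (∃ U : Set ℝ, IsOpen U ∧ Set.Icc (-B) B ⊆ U ∧ ∀ ω ∈ U, FT (fun t => φ t) ω = 0) →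
    (∫ t : ℝ, f t * φ t) = 0

/-- The kernel class `M(L_ε, B)`. -/
def MemKernelClass (Leps B : ℝ) (g : ℝ → ℂ) : Prop :=
  Continuous g ∧ Integrable g ∧
  (∀ ω : ℝ, (FT g ω).im = 0) ∧
  (∀ ω : ℝ, FT g (-ω) = FT g ω) ∧
  (∀ ω : ℝ, |ω| ≤ B → FT g ω = 1) ∧
  (∀ ω : ℝ, B ≤ |ω| → |ω| ≤ Leps * B → 0 ≤ (FT g ω).re ∧ (FT g ω).re ≤ 1) ∧
  (∀ ω₁ ω₂ : ℝ, B ≤ ω₁ → ω₁ ≤ ω₂ → ω₂ ≤ Leps * B → (FT g ω₂).re ≤ (FT g ω₁).re) ∧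
  (∀ ω : ℝ, Leps * B < |ω| → FT g ω = 0)

/-- `C₂(L, L_ε)` with `B = π`, valued in `[0, ∞]`. -/
noncomputable def C2 (L Leps : ℝ) : ℝ≥0∞ :=
  ⨅ g ∈ {g : ℝ → ℂ | MemKernelClass Leps Real.pi g},
    ⨆ t : ℝ, ENNReal.ofReal (1 / L) * ∑' l : ℤ, (‖g (t - l / L)‖₊ : ℝ≥0∞)

/-- The trapezoidal kernel. -/
noncomputable def trapKernel (Leps B : ℝ) (t : ℝ) : ℝ :=
  if t = 0 then (Leps + 1) * B / (2 * Real.pi)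
  else 2 * Real.sin ((Leps + 1) * B * t / 2) * Real.sin ((Leps - 1) * B * t / 2) /
    (Real.pi * (Leps - 1) * B * t ^ 2)

/-- The triangle kernel. -/
noncomputable def triKernel (n : ℕ) (t : ℝ) : ℝ :=
  if t = 0 then 1 / (2 * n)
  else 2 * n * Real.sin (Real.pi * t / (2 * n)) ^ 2 / (Real.pi ^ 2 * t ^ 2)


/-- The extremal function `f_L`. -/
noncomputable def fL (L : ℕ) (t : ℝ) : ℂ :=
  ((Real.cos (Real.pi * (t - 1 / (2 * (L : ℝ)))) / Real.cos (Real.pi / (2 * (L : ℝ))) : ℝ) : ℂ)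


/- Idea: `f_L` is a cosine of frequency `π`, so its Fourier transform is carried by `{±π}`.
At a sample point the numerator is the cosine of an odd multiple of `π/(2L)`, an angle at
distance at least `π/(2L)` from `πℤ`, so it is at most `cos(π/(2L))` in absolute value; the
peak `1` of the cosine sits halfway between the samples `0` and `1/L`. -/

theorem ciSup_eq_of_forall_le_apply {ι α : Type*} [ConditionallyCompleteLattice α] {f : ι → α}
    (i₀ : ι) (h : ∀ i, f i ≤ f i₀) : ⨆ i, f i = f i₀ :=
  haveI : Nonempty ι := ⟨i₀⟩
  le_antisymm (ciSup_le h) (le_ciSup ⟨f i₀, Set.forall_mem_range.2 h⟩ i₀)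

section Trigonometry

theorem cos_pi_div_two_mul_pos {x : ℝ} (hx : 1 < x) : 0 < cos (π / (2 * x)) := by
  apply cos_pos_of_mem_Ioo
  constructor
  · have : 0 < π / (2 * x) := by positivity
    linarith [pi_pos]
  · exact div_lt_div_of_pos_left pi_pos two_pos (by linarith)

theorem cos_pi_div_two_mul_natCast_pos {L : ℕ} (hL : 2 ≤ L) : 0 < cos (π / (2 * L)) :=
  cos_pi_div_two_mul_pos (by exact_mod_cast hL)

theorem abs_cos_le_cos_of_mem_Icc {δ x : ℝ} (hδ : 0 ≤ δ) (hx : x ∈ Icc δ (π - δ)) :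
    |cos x| ≤ cos δ := by
  refine abs_le.2 ⟨?_, cos_le_cos_of_nonneg_of_le_pi hδ (by linarith [hx.2]) hx.1⟩
  rw [← cos_pi_sub]
  exact cos_le_cos_of_nonneg_of_le_pi (hδ.trans hx.1) (by linarith) hx.2

theorem abs_cos_add_int_mul_pi (x : ℝ) (n : ℤ) : |cos (x + n * π)| = |cos x| := by
  rw [cos_add_int_mul_pi, abs_mul, abs_neg_one_zpow, one_mul]

theorem abs_cos_odd_mul_pi_div_le {n : ℕ} (hn : 0 < n) {k : ℤ} (hk : Odd k) :
    |cos (k * π / (2 * n))| ≤ cos (π / (2 * n)) := by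
  set δ := π / (2 * n) with hδ
  set m := k % (2 * n)
  have hkm : 2 * n * (k / (2 * n)) + m = k := Int.mul_ediv_add_emod k (2 * n)
  have hm_odd : m % 2 = 1 := by
    rw [Int.emod_emod_of_dvd k (dvd_mul_right 2 (n : ℤ))]
    exact Int.odd_iff.1 hk
  have hm_nonneg : 0 ≤ m := Int.emod_nonneg k (by omega)
  have hm_lt : m < 2 * n := Int.emod_lt_of_pos k (by omega)
  have hm_one : (1 : ℝ) ≤ m := by exact_mod_cast (show 1 ≤ m by omega)
  have hm_le : (m : ℝ) ≤ 2 * n - 1 := by exact_mod_cast (show m ≤ 2 * n - 1 by omega)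
  have hδ_nonneg : 0 ≤ δ := by positivity
  have hπ : π = 2 * n * δ := by
    rw [hδ]; field_simp
  have hk_angle : k * π / (2 * n) = m * δ + (k / (2 * n) : ℤ) * π := by
    have hkR : (k : ℝ) = 2 * n * (k / (2 * n) : ℤ) + m := by exact_mod_cast hkm.symm
    rw [hkR, hδ]; field_simp; ring
  rw [hk_angle, abs_cos_add_int_mul_pi]
  refine abs_cos_le_cos_of_mem_Icc hδ_nonneg ⟨le_mul_of_one_le_left hδ_nonneg hm_one, ?_⟩
  calc m * δ ≤ (2 * n - 1) * δ := mul_le_mul_of_nonneg_right hm_le hδ_nonneg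
    _ = π - δ := by rw [hπ]; ring

end Trigonometry

section BandLimited

theorem BandLimited.const_mul {B : ℝ} {f : ℝ → ℂ} (hf : BandLimited B f) (c : ℂ) :
    BandLimited B (fun t => c * f t) := by
  obtain ⟨hcont, ⟨C, hC⟩, hsupp⟩ := hf
  refine ⟨continuous_const.mul hcont, ⟨‖c‖ * C, fun t => ?_⟩, fun φ hφ => ?_⟩
  · rw [norm_mul]
    exact mul_le_mul_of_nonneg_left (hC t) (norm_nonneg c)
  · simp_rw [mul_assoc]
    rw [integral_const_mul, hsupp φ hφ, mul_zero]

theorem integrable_mul_exp {g : ℝ → ℂ} (hg : Integrable g) (ω : ℝ) :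
    Integrable (fun t : ℝ => g t * Complex.exp (-(Complex.I * ω * t))) := by
  refine hg.mul_bdd (c := 1) (by fun_prop) (Filter.Eventually.of_forall fun t => ?_)
  rw [show -(Complex.I * ω * t) = ((-(ω * t) : ℝ) : ℂ) * Complex.I by push_cast; ring,
    Complex.norm_exp_ofReal_mul_I]

theorem integral_cos_mul_eq_FT {g : ℝ → ℂ} (hg : Integrable g) (B a : ℝ) :
    ∫ t : ℝ, (cos (B * (t - a)) : ℂ) * g t =
      (Complex.exp (-(Complex.I * B * a)) * FT g (-B) +
        Complex.exp (Complex.I * B * a) * FT g B) / 2 := by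
  have hcos : ∀ t : ℝ, (cos (B * (t - a)) : ℂ) * g t =
      Complex.exp (-(Complex.I * B * a)) / 2 * (g t * Complex.exp (-(Complex.I * (-B : ℝ) * t))) +
        Complex.exp (Complex.I * B * a) / 2 * (g t * Complex.exp (-(Complex.I * B * t))) := by
    intro t
    have hplus : Complex.exp (↑(B * (t - a)) * Complex.I) =
        Complex.exp (-(Complex.I * B * a)) * Complex.exp (-(Complex.I * (-B : ℝ) * t)) := by
      rw [← Complex.exp_add]; push_cast; ring_nf
    have hminus : Complex.exp (-↑(B * (t - a)) * Complex.I) =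
        Complex.exp (Complex.I * B * a) * Complex.exp (-(Complex.I * B * t)) := by
      rw [← Complex.exp_add]; push_cast; ring_nf
    rw [Complex.ofReal_cos, Complex.cos, hplus, hminus]
    ring
  simp_rw [hcos]
  rw [integral_add ((integrable_mul_exp hg _).const_mul _) ((integrable_mul_exp hg _).const_mul _),
    integral_const_mul, integral_const_mul]
  simp only [FT]
  push_cast
  ring

theorem bandLimited_cos {B : ℝ} (hB : 0 ≤ B) (a : ℝ) :
    BandLimited B (fun t => (cos (B * (t - a)) : ℂ)) := by
  refine ⟨by fun_prop, ⟨1, fun t => ?_⟩, ?_⟩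
  · rw [Complex.norm_real, norm_eq_abs]
    exact abs_cos_le_one _
  · rintro φ ⟨U, -, hBU, hU⟩
    rw [integral_cos_mul_eq_FT φ.integrable, hU _ (hBU ⟨le_rfl, by linarith⟩),
      hU _ (hBU ⟨by linarith, le_rfl⟩)]
    ring

end BandLimited

section ExtremalFunction

variable {L : ℕ}

theorem fL_eq_const_mul_cos :
    fL L = fun t => ((cos (π / (2 * L)))⁻¹ : ℂ) * cos (π * (t - 1 / (2 * L))) := by
  ext t
  simp only [fL, div_eq_inv_mul]
  push_cast
  rfl

theorem bandLimited_fL : BandLimited π (fL L) := by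
  rw [fL_eq_const_mul_cos]
  exact (bandLimited_cos pi_pos.le _).const_mul _

theorem fL_one_div_two_mul :
    fL L (1 / (2 * L)) = ((1 / cos (π / (2 * L)) : ℝ) : ℂ) := by
  rw [fL, sub_self, mul_zero, cos_zero]

theorem norm_fL (hL : 2 ≤ L) (t : ℝ) :
    ‖fL L t‖ = |cos (π * (t - 1 / (2 * L)))| / cos (π / (2 * L)) := by
  have hc := cos_pi_div_two_mul_natCast_pos hL
  rw [fL, Complex.norm_real, norm_eq_abs, abs_div, abs_of_pos hc]

theorem norm_fL_le (hL : 2 ≤ L) (t : ℝ) : ‖fL L t‖ ≤ 1 / cos (π / (2 * L)) := by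
  rw [norm_fL hL]
  gcongr
  exacts [(cos_pi_div_two_mul_natCast_pos hL).le, abs_cos_le_one _]

theorem norm_fL_sample_le (hL : 2 ≤ L) (l : ℤ) : ‖fL L (l / L)‖ ≤ 1 := by
  have hc := cos_pi_div_two_mul_natCast_pos hL
  have hangle : π * (l / L - 1 / (2 * L)) = ((2 * l - 1 : ℤ) : ℝ) * π / (2 * L) := by
    have : (L : ℝ) ≠ 0 := by positivity
    push_cast; field_simp
  rw [norm_fL hL, hangle, div_le_one hc]
  exact abs_cos_odd_mul_pi_div_le (by omega) ⟨l - 1, by ring⟩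

theorem norm_fL_zero (hL : 2 ≤ L) : ‖fL L ((0 : ℤ) / L)‖ = 1 := by
  have hc := cos_pi_div_two_mul_natCast_pos hL
  rw [norm_fL hL, Int.cast_zero, zero_div, zero_sub, mul_neg, cos_neg, mul_one_div,
    abs_of_pos hc, div_self hc.ne']

theorem iSup_norm_fL (hL : 2 ≤ L) : ⨆ t : ℝ, ‖fL L t‖ = 1 / cos (π / (2 * L)) := by
  have hpeak : ‖fL L (1 / (2 * L))‖ = 1 / cos (π / (2 * L)) := by
    rw [norm_fL hL, sub_self, mul_zero, cos_zero, abs_one]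
  rw [← hpeak]
  exact ciSup_eq_of_forall_le_apply _ fun t => (norm_fL_le hL t).trans_eq hpeak.symm

theorem iSup_norm_fL_sample (hL : 2 ≤ L) : ⨆ l : ℤ, ‖fL L (l / L)‖ = 1 := by
  rw [← norm_fL_zero hL]
  exact ciSup_eq_of_forall_le_apply (0 : ℤ) fun l =>
    (norm_fL_sample_le hL l).trans_eq (norm_fL_zero hL).symm

end ExtremalFunction

/-- for integer oversampling the bound `1/cos(π/(2L))` is attained. -/
theorem stmt2 (L : ℕ) (hL : 2 ≤ L) :
    BandLimited Real.pi (fL L) ∧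
    (∀ l : ℤ, ‖fL L ((l : ℝ) / (L : ℝ))‖ ≤ 1) ∧
    fL L (1 / (2 * (L : ℝ))) = ((1 / Real.cos (Real.pi / (2 * (L : ℝ))) : ℝ) : ℂ) ∧
    (⨆ t : ℝ, ‖fL L t‖) =
      (1 / Real.cos (Real.pi / (2 * (L : ℝ)))) * ⨆ l : ℤ, ‖fL L ((l : ℝ) / (L : ℝ))‖ := by
  refine ⟨bandLimited_fL, norm_fL_sample_le hL, fL_one_div_two_mul, ?_⟩
  rw [iSup_norm_fL hL, iSup_norm_fL_sample hL, mul_one]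
end

section
/- Let B > 0 and L_eps > 1, and let S be the trapezoidal kernel with parameters L_eps and B. Then S is integrable and its Fourier transform 𝓕S(ω) = ∫_ℝ S(t) e^{−iωt} dt equals 1 for |ω| <= B, equals (L_eps·B − |ω|)/((L_eps − 1)B) for B <= |ω| <= L_eps·B, and equals 0 for |ω| >= L_eps·B. In particular S belongs to the kernel class M(L_eps, B). -/
open MeasureTheory Real Set
open scoped ENNReal NNReal

/-!
The trapezoid is a difference of two tents, `((L B - |ω|)₊ - (B - |ω|)₊) / ((L - 1) B)`, and the
tent `(a - |ω|)₊` has cosine transform `2 (1 - cos (a t)) / t²`. Hence, after the `2π` rescaling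
between `FT` and Mathlib's `𝓕`, the inverse Fourier transform of the trapezoid is the trapezoidal
kernel away from `t = 0`. The kernel is continuous (a product of two `sinc`s) and `O(t⁻²)`, hence
integrable, so Fourier inversion returns the trapezoid as its Fourier transform.
-/

open scoped FourierTransform

lemma FT_eq_fourier (g : ℝ → ℂ) (ω : ℝ) : FT g ω = 𝓕 g (ω / (2 * π)) := by
  rw [FT, Real.fourier_real_eq_integral_exp_smul]
  refine integral_congr_ae (Filter.Eventually.of_forall fun t => ?_)
  simp only [smul_eq_mul]
  rw [mul_comm]
  congr 2
  push_cast
  field_simp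

lemma fourier_ofReal_eq_integral_mul_cos {f : ℝ → ℝ} (hf : Integrable f) (heven : ∀ x, f (-x) = f x)
    (w : ℝ) : 𝓕 (fun x => (f x : ℂ)) w = ((∫ x, f x * cos (2 * π * w * x) : ℝ) : ℂ) := by
  set F : ℝ → ℂ := fun x => 𝐞 (-(x * w)) • (f x : ℂ)
  have hF : Integrable F := by
    have := (Real.fourierIntegral_convergent_iff w).2 (hf.ofReal (𝕜 := ℂ))
    refine this.congr (Filter.Eventually.of_forall fun v => ?_)
    simp [F, mul_comm]
  have hsym : ∀ x, F x + F (-x) = ((2 * (f x * cos (2 * π * w * x)) : ℝ) : ℂ) := by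
    intro x
    simp only [F, heven, Circle.smul_def, Real.fourierChar_apply, smul_eq_mul]
    push_cast
    rw [Complex.cos]
    ring_nf
  rw [Real.fourier_real_eq]
  have h2 : 2 * ∫ x, F x = 2 * ((∫ x, f x * cos (2 * π * w * x) : ℝ) : ℂ) := by
    calc 2 * ∫ x, F x = (∫ x, F x) + ∫ x, F (-x) := by rw [integral_neg_eq_self]; ring
      _ = _ := by
        rw [← integral_add hF hF.comp_neg]
        simp_rw [hsym]
        rw [integral_complex_ofReal, integral_const_mul]; push_cast; ring
  exact mul_left_cancel₀ two_ne_zero h2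

def tent (a x : ℝ) : ℝ := max 0 (a - |x|)

section Tent

variable {a x : ℝ}

lemma tent_neg (a x : ℝ) : tent a (-x) = tent a x := by simp [tent]

@[fun_prop]
lemma continuous_tent (a : ℝ) : Continuous (tent a) := by unfold tent; fun_prop

lemma tent_of_abs_le (h : |x| ≤ a) : tent a x = a - |x| := max_eq_right (by linarith)

lemma tent_of_le_abs (h : a ≤ |x|) : tent a x = 0 := max_eq_left (by linarith)

lemma support_tent_subset (a : ℝ) : Function.support (tent a) ⊆ Ioo (-a) a := by
  intro x hx
  by_contra hxa
  exact hx (tent_of_le_abs (by rw [mem_Ioo, ← abs_lt] at *; linarith))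

lemma integrable_tent (a : ℝ) : Integrable (tent a) :=
  (continuous_tent a).integrable_of_hasCompactSupport <|
    HasCompactSupport.intro isCompact_Icc fun _ hx =>
      Function.notMem_support.1 fun h => hx (Ioo_subset_Icc_self (support_tent_subset a h))

lemma integral_tent_mul_cos (ha : 0 ≤ a) {s : ℝ} (hs : s ≠ 0) :
    ∫ x, tent a x * cos (s * x) = 2 * (1 - cos (a * s)) / s ^ 2 := by
  set g := fun x => tent a x * cos (s * x)
  have hg : Continuous g := by fun_prop
  have hsupp : Function.support g ⊆ Ioc (-a) a := fun x hx =>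
    Ioo_subset_Ioc_self (support_tent_subset a (Function.support_mul_subset_left _ _ hx))
  have hhalf : ∫ x in (-a)..0, g x = ∫ x in 0..a, g x := by
    rw [← neg_zero, ← intervalIntegral.integral_comp_neg]
    simp [g, tent_neg]
  have hanti : ∀ x ∈ uIcc 0 a,
      HasDerivAt (fun x => (a - x) * sin (s * x) / s - cos (s * x) / s ^ 2)
        ((a - x) * cos (s * x)) x := by
    intro x _
    have hsx : HasDerivAt (fun x => s * x) s x := by simpa using (hasDerivAt_id x).const_mul s
    refine ((((hasDerivAt_id x).const_sub a).mul hsx.sin).div_const s |>.sub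
      (hsx.cos.div_const (s ^ 2))).congr_deriv ?_
    simp only [id]
    field_simp
    ring
  have hright : ∫ x in 0..a, g x = (1 - cos (a * s)) / s ^ 2 := by
    rw [intervalIntegral.integral_congr (g := fun x => (a - x) * cos (s * x)),
      intervalIntegral.integral_eq_sub_of_hasDerivAt hanti
        ((by fun_prop : Continuous _).intervalIntegrable _ _)]
    · simp only [sub_self, zero_mul, mul_zero, sin_zero, cos_zero, zero_div]
      ring_nf
    · intro x hx
      rw [uIcc_of_le ha] at hx
      simp only [g, tent_of_abs_le (abs_le.2 ⟨by linarith [hx.1], hx.2⟩), abs_of_nonneg hx.1]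
  rw [← intervalIntegral.integral_eq_integral_of_support_subset hsupp,
    ← intervalIntegral.integral_add_adjacent_intervals (b := 0) (hg.intervalIntegrable _ _)
      (hg.intervalIntegrable _ _), hhalf, hright]
  ring

end Tent

noncomputable def trapezoid (Leps B ω : ℝ) : ℝ :=
  (tent (Leps * B) ω - tent B ω) / ((Leps - 1) * B)

section Trapezoid

variable {Leps B ω : ℝ}

lemma trapezoid_neg (ω : ℝ) : trapezoid Leps B (-ω) = trapezoid Leps B ω := by
  simp [trapezoid, tent_neg]

@[fun_prop]
lemma continuous_trapezoid : Continuous (trapezoid Leps B) := by unfold trapezoid; fun_prop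

lemma integrable_trapezoid : Integrable (trapezoid Leps B) :=
  ((integrable_tent _).sub (integrable_tent _)).div_const _

lemma trapezoid_of_abs_le (hB : 0 < B) (hL : 1 < Leps) (h : |ω| ≤ B) :
    trapezoid Leps B ω = 1 := by
  have hLB : (Leps - 1) * B ≠ 0 := by positivity
  rw [trapezoid, tent_of_abs_le (by nlinarith), tent_of_abs_le h, div_eq_one_iff_eq hLB]
  ring

lemma trapezoid_of_le_abs_of_abs_le (h₁ : B ≤ |ω|) (h₂ : |ω| ≤ Leps * B) :
    trapezoid Leps B ω = (Leps * B - |ω|) / ((Leps - 1) * B) := by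
  rw [trapezoid, tent_of_abs_le h₂, tent_of_le_abs h₁, sub_zero]

lemma trapezoid_of_le_abs (hBL : B ≤ Leps * B) (h : Leps * B ≤ |ω|) :
    trapezoid Leps B ω = 0 := by
  rw [trapezoid, tent_of_le_abs h, tent_of_le_abs (hBL.trans h), sub_zero, zero_div]

end Trapezoid

lemma integrable_of_abs_le_of_abs_mul_sq_le {f : ℝ → ℝ} {a b : ℝ} (hf : AEStronglyMeasurable f)
    (h₀ : ∀ t, |f t| ≤ a) (h₂ : ∀ t, |f t| * t ^ 2 ≤ b) : Integrable f := by
  refine (integrable_inv_one_add_sq.const_mul (a + b)).mono' hf (ae_of_all _ fun t => ?_)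
  rw [norm_eq_abs, ← div_eq_mul_inv, le_div_iff₀ (by positivity)]
  linarith [h₀ t, h₂ t]

section TrapKernel

variable {Leps B : ℝ}

lemma trapKernel_of_ne_zero {t : ℝ} (ht : t ≠ 0) :
    trapKernel Leps B t = (cos (B * t) - cos (Leps * B * t)) / (π * (Leps - 1) * B * t ^ 2) := by
  rw [trapKernel, if_neg ht, cos_sub_cos,
    show (B * t - Leps * B * t) / 2 = -((Leps - 1) * B * t / 2) by ring, sin_neg]
  ring_nf

lemma trapKernel_eq_sinc (hB : 0 < B) (hL : 1 < Leps) (t : ℝ) :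
    trapKernel Leps B t =
      (Leps + 1) * B / (2 * π) * sinc ((Leps + 1) * B * t / 2) * sinc ((Leps - 1) * B * t / 2) := by
  rcases eq_or_ne t 0 with rfl | ht
  · simp [trapKernel]
  · have : (Leps - 1) * B ≠ 0 := by positivity
    rw [trapKernel, if_neg ht, sinc_of_ne_zero (by positivity), sinc_of_ne_zero (by positivity)]
    field_simp

lemma continuous_trapKernel (hB : 0 < B) (hL : 1 < Leps) : Continuous (trapKernel Leps B) := by
  simp_rw [funext (trapKernel_eq_sinc hB hL)]
  fun_prop

lemma abs_trapKernel_le (hB : 0 < B) (hL : 1 < Leps) (t : ℝ) :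
    |trapKernel Leps B t| ≤ (Leps + 1) * B / (2 * π) := by
  rw [trapKernel_eq_sinc hB hL, abs_mul, abs_mul, abs_of_pos (by positivity)]
  have h₁ := abs_sinc_le_one ((Leps + 1) * B * t / 2)
  have h₂ := abs_sinc_le_one ((Leps - 1) * B * t / 2)
  have : 0 < (Leps + 1) * B / (2 * π) := by positivity
  calc _ ≤ (Leps + 1) * B / (2 * π) * 1 * 1 := by gcongr
    _ = _ := by ring

lemma abs_trapKernel_mul_sq_le (hB : 0 < B) (hL : 1 < Leps) (t : ℝ) :
    |trapKernel Leps B t| * t ^ 2 ≤ 2 / (π * (Leps - 1) * B) := by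
  rcases eq_or_ne t 0 with rfl | ht
  · have : 0 < π * (Leps - 1) * B := by positivity
    simp; positivity
  · have hden : 0 < π * (Leps - 1) * B := by positivity
    have hsin : |2 * sin ((Leps + 1) * B * t / 2) * sin ((Leps - 1) * B * t / 2)| ≤ 2 := by
      rw [abs_mul, abs_mul, abs_two]
      nlinarith [abs_sin_le_one ((Leps + 1) * B * t / 2), abs_sin_le_one ((Leps - 1) * B * t / 2),
        abs_nonneg (sin ((Leps + 1) * B * t / 2)), abs_nonneg (sin ((Leps - 1) * B * t / 2))]
    rw [trapKernel, if_neg ht, abs_div, abs_of_pos (mul_pos hden (by positivity)),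
      div_mul_eq_mul_div, mul_div_mul_right _ _ (by positivity)]
    gcongr

lemma integrable_trapKernel (hB : 0 < B) (hL : 1 < Leps) : Integrable (trapKernel Leps B) :=
  integrable_of_abs_le_of_abs_mul_sq_le (continuous_trapKernel hB hL).aestronglyMeasurable
    (abs_trapKernel_le hB hL) (abs_trapKernel_mul_sq_le hB hL)

end TrapKernel

section Fourier

variable {Leps B : ℝ}

lemma integral_trapezoid_mul_cos (hB : 0 < B) (hL : 1 < Leps) {t : ℝ} (ht : t ≠ 0) :
    ∫ ω, trapezoid Leps B ω * cos (t * ω) = 2 * π * trapKernel Leps B t := by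
  have hcos : ∀ a, Integrable fun ω => tent a ω * cos (t * ω) := fun a =>
    (integrable_tent a).mul_bdd (by fun_prop) (ae_of_all _ fun ω => abs_cos_le_one _)
  have hLB : (Leps - 1) * B ≠ 0 := by positivity
  simp only [trapezoid, div_mul_eq_mul_div, sub_mul]
  rw [integral_div, integral_sub (hcos _) (hcos _), integral_tent_mul_cos (by positivity) ht,
    integral_tent_mul_cos hB.le ht, trapKernel_of_ne_zero ht]
  field_simp
  ring

-- Only a.e.: the cosine transform of a tent is evaluated for `t ≠ 0`.
lemma fourier_trapezoid_comp_mul_ae_eq (hB : 0 < B) (hL : 1 < Leps) :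
    𝓕 (fun ξ => (trapezoid Leps B (2 * π * ξ) : ℂ)) =ᵐ[volume]
      fun t => (trapKernel Leps B t : ℂ) := by
  filter_upwards [Measure.ae_ne volume 0] with t ht
  rw [fourier_ofReal_eq_integral_mul_cos (integrable_trapezoid.comp_mul_left' (by positivity))
    (fun ξ => by rw [mul_neg, trapezoid_neg])]
  congr 1
  calc ∫ ξ, trapezoid Leps B (2 * π * ξ) * cos (2 * π * t * ξ)
      = ∫ ξ, trapezoid Leps B (2 * π * ξ) * cos (t * (2 * π * ξ)) := by
        congr! 4 with ξ
        ring
    _ = (2 * π)⁻¹ * ∫ ω, trapezoid Leps B ω * cos (t * ω) := by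
        rw [Measure.integral_comp_mul_left (fun ω => trapezoid Leps B ω * cos (t * ω)),
          abs_of_pos (by positivity), smul_eq_mul]
    _ = trapKernel Leps B t := by
        rw [integral_trapezoid_mul_cos hB hL ht, inv_mul_cancel_left₀ (by positivity)]

lemma FT_trapKernel (hB : 0 < B) (hL : 1 < Leps) (ω : ℝ) :
    FT (fun t => (trapKernel Leps B t : ℂ)) ω = trapezoid Leps B ω := by
  set T : ℝ → ℂ := fun ξ => trapezoid Leps B (2 * π * ξ)
  have hT : Integrable T := (integrable_trapezoid.comp_mul_left' (by positivity)).ofReal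
  have hTc : Continuous T := by fun_prop
  have hFT := fourier_trapezoid_comp_mul_ae_eq hB hL
  have hinv : 𝓕⁻ T = 𝓕 T := by
    rw [Real.fourierInv_eq_fourier_comp_neg]
    simp only [T, mul_neg, trapezoid_neg]
  have hFTi : Integrable (𝓕 T) := (integrable_trapKernel hB hL).ofReal.congr hFT.symm
  rw [FT_eq_fourier, ← Real.fourier_congr_ae hFT, ← hinv,
    hTc.fourier_fourierInv_eq hT (hinv ▸ hFTi)]
  simp only [T]
  congr 2
  field_simp

end Fourier

lemma memKernelClass_of_FT_eq_trapezoid {Leps B : ℝ} (hB : 0 < B) (hL : 1 < Leps) {g : ℝ → ℂ}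
    (hc : Continuous g) (hi : Integrable g) (hFT : ∀ ω, FT g ω = trapezoid Leps B ω) :
    MemKernelClass Leps B g := by
  have hLB : 0 < (Leps - 1) * B := by positivity
  refine ⟨hc, hi, fun ω => by simp [hFT], fun ω => by simp [hFT, trapezoid_neg],
    fun ω h => by simp [hFT, trapezoid_of_abs_le hB hL h], fun ω h₁ h₂ => ?_,
    fun ω₁ ω₂ h₁ h₂ h₃ => ?_, fun ω h => by simp [hFT, trapezoid_of_le_abs (by nlinarith) h.le]⟩
  · simp only [hFT, Complex.ofReal_re, trapezoid_of_le_abs_of_abs_le h₁ h₂]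
    exact ⟨div_nonneg (by linarith) hLB.le, (div_le_one hLB).2 (by linarith)⟩
  · have hω₁ : |ω₁| = ω₁ := abs_of_pos (hB.trans_le h₁)
    have hω₂ : |ω₂| = ω₂ := abs_of_pos (hB.trans_le (h₁.trans h₂))
    simp only [hFT, Complex.ofReal_re]
    rw [trapezoid_of_le_abs_of_abs_le (by linarith) (by linarith),
      trapezoid_of_le_abs_of_abs_le (by linarith) (by linarith), hω₁, hω₂]
    gcongr

/-- the Fourier transform of the trapezoidal kernel is the trapezoid,
and the trapezoidal kernel belongs to the kernel class `M(L_ε, B)`. -/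
theorem stmt4 (B Leps : ℝ) (hB : 0 < B) (hLeps : 1 < Leps) :
    Integrable (fun t : ℝ => (trapKernel Leps B t : ℂ)) ∧
    (∀ ω : ℝ, |ω| ≤ B → FT (fun t : ℝ => (trapKernel Leps B t : ℂ)) ω = 1) ∧
    (∀ ω : ℝ, B ≤ |ω| → |ω| ≤ Leps * B →
      FT (fun t : ℝ => (trapKernel Leps B t : ℂ)) ω =
        (((Leps * B - |ω|) / ((Leps - 1) * B) : ℝ) : ℂ)) ∧
    (∀ ω : ℝ, Leps * B ≤ |ω| → FT (fun t : ℝ => (trapKernel Leps B t : ℂ)) ω = 0) ∧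
    MemKernelClass Leps B (fun t : ℝ => (trapKernel Leps B t : ℂ)) := by
  have hFT := FT_trapKernel hB hLeps
  have hint := (integrable_trapKernel hB hLeps).ofReal (𝕜 := ℂ)
  have hcont := Complex.continuous_ofReal.comp (continuous_trapKernel hB hLeps)
  refine ⟨hint, fun ω h => ?_, fun ω h₁ h₂ => ?_, fun ω h => ?_,
    memKernelClass_of_FT_eq_trapezoid hB hLeps hcont hint hFT⟩
  · rw [hFT, trapezoid_of_abs_le hB hLeps h, Complex.ofReal_one]
  · rw [hFT, trapezoid_of_le_abs_of_abs_le h₁ h₂]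
  · rw [hFT, trapezoid_of_le_abs (by nlinarith) h, Complex.ofReal_zero]
end

section
/- Let L_eps > 1, let S be the trapezoidal kernel with parameters L_eps and B = π, and let L >= (L_eps + 1)/2 be a real number. Then sup_{t∈ℝ} (1/L) Σ_{l∈ℤ} |S(t − l/L)| <= sqrt((L_eps + 1)/(L_eps − 1)). -/
open MeasureTheory Real Set
open scoped ENNReal NNReal

/-!
Write `a = (L_ε + 1)/2` and `b = (L_ε − 1)/2`. For `B = π` the kernel is
`a · sinc(πat) · sinc(πbt)`, and AM–GM bounds its modulus by `(√(a/b)/2) (F_a + F_b)`, where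
`F_c(t) = c · sinc(πct)²` is the Fejér kernel. The Fourier transform of `F_c` is the triangle
`(1 − |ξ|/c)₊`, so for `c ≤ L` Poisson summation shows that the samples `F_c(t − l/L)`, `l ∈ ℤ`,
sum to exactly `L`. Hence `(1/L) Σ_l |S(t − l/L)| ≤ √(a/b)` for every `t`.
-/

open Filter Asymptotics
open scoped FourierTransform Complex

noncomputable def triangle (a ξ : ℝ) : ℝ := max (1 - |ξ| / a) 0

noncomputable def fejer (a t : ℝ) : ℝ := a * sinc (π * a * t) ^ 2

section Fejer

variable {a : ℝ}

lemma triangle_of_abs_le (ha : 0 < a) {ξ : ℝ} (h : |ξ| ≤ a) : triangle a ξ = 1 - |ξ| / a :=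
  max_eq_left (sub_nonneg.2 ((div_le_one ha).2 h))

lemma triangle_of_le_abs (ha : 0 < a) {ξ : ℝ} (h : a ≤ |ξ|) : triangle a ξ = 0 :=
  max_eq_right (sub_nonpos.2 ((one_le_div ha).2 h))

@[fun_prop]
lemma continuous_triangle (a : ℝ) : Continuous (triangle a) := by
  unfold triangle; fun_prop

lemma support_triangle_subset (ha : 0 < a) : Function.support (triangle a) ⊆ Ioo (-a) a := by
  intro ξ hξ
  by_contra hξ'
  rw [mem_Ioo, not_and_or, not_lt, not_lt] at hξ'
  refine hξ (triangle_of_le_abs ha (le_abs'.2 ?_))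
  rcases hξ' with h | h
  · exact Or.inl (by linarith)
  · exact Or.inr h

lemma integrable_triangle (ha : 0 < a) : Integrable (fun ξ ↦ (triangle a ξ : ℂ)) := by
  refine Continuous.integrable_of_hasCompactSupport (by fun_prop) ?_
  refine HasCompactSupport.intro (isCompact_Icc (a := -a) (b := a)) fun ξ hξ ↦ ?_
  simp only [Complex.ofReal_eq_zero]
  exact Function.notMem_support.1 fun h ↦ hξ (Ioo_subset_Icc_self (support_triangle_subset ha h))

lemma integral_one_sub_div_mul_cexp (ha : a ≠ 0) {c : ℂ} (hc : c ≠ 0) :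
    ∫ ξ in (0 : ℝ)..a, (1 - ξ / a : ℂ) * cexp (c * ξ) =
      (cexp (c * a) - 1 - c * a) / (a * c ^ 2) := by
  have ha' : (a : ℂ) ≠ 0 := Complex.ofReal_ne_zero.2 ha
  have hderiv : ∀ z : ℂ, HasDerivAt (fun z ↦ cexp (c * z) * ((1 - z / a) / c + 1 / (a * c ^ 2)))
      ((1 - z / a) * cexp (c * z)) z := by
    intro z
    have h := (((hasDerivAt_id z).const_mul c).cexp).mul
      ((((hasDerivAt_id z).div_const (a : ℂ)).const_sub 1).div_const c |>.add_const
        (1 / (a * c ^ 2)))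
    refine h.congr_deriv ?_
    simp only [id, mul_one]
    field_simp
    ring
  rw [intervalIntegral.integral_eq_sub_of_hasDerivAt (fun x _ ↦ (hderiv x).comp_ofReal)
    (by apply Continuous.intervalIntegrable; fun_prop)]
  simp only [Complex.ofReal_zero, mul_zero, Complex.exp_zero, zero_div, sub_zero]
  field_simp
  ring

lemma fourierInv_triangle_eq_integral (ha : 0 < a) (v : ℝ) :
    𝓕⁻ (fun ξ ↦ (triangle a ξ : ℂ)) v = ∫ ξ in (0 : ℝ)..a, (1 - ξ / a : ℂ) *
      (cexp (2 * π * v * Complex.I * ξ) + cexp (-(2 * π * v * Complex.I) * ξ)) := by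
  set g : ℝ → ℂ := fun ξ ↦ cexp (2 * π * v * Complex.I * ξ) * triangle a ξ
  have hg : Continuous g := by fun_prop
  have hsupp : Function.support g ⊆ Ioc (-a) a := by
    refine (Function.support_mul_subset_right _ _).trans (fun ξ hξ ↦ ?_)
    exact Ioo_subset_Ioc_self (support_triangle_subset ha (by simpa using hξ))
  have hreflect := intervalIntegral.integral_comp_neg (a := 0) (b := a) g
  rw [neg_zero] at hreflect
  calc 𝓕⁻ (fun ξ ↦ (triangle a ξ : ℂ)) v = ∫ ξ, g ξ := by
        rw [Real.fourierInv_eq']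
        congr 1 with ξ
        simp only [g, smul_eq_mul, RCLike.inner_apply, conj_trivial]
        push_cast
        ring_nf
    _ = (∫ ξ in -a..0, g ξ) + ∫ ξ in 0..a, g ξ := by
        rw [intervalIntegral.integral_add_adjacent_intervals (hg.intervalIntegrable _ _)
          (hg.intervalIntegrable _ _),
          intervalIntegral.integral_eq_integral_of_support_subset hsupp]
    _ = ∫ ξ in (0 : ℝ)..a, (g (-ξ) + g ξ) := by
        rw [← hreflect]
        exact (intervalIntegral.integral_add ((hg.comp continuous_neg).intervalIntegrable _ _)
          (hg.intervalIntegrable _ _)).symm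
    _ = _ := by
        refine intervalIntegral.integral_congr fun ξ hξ ↦ ?_
        rw [uIcc_of_le ha.le] at hξ
        have hT : ∀ x, |x| = ξ → triangle a x = 1 - ξ / a := fun x hx ↦ by
          rw [triangle_of_abs_le ha (hx ▸ hξ.2), hx]
        simp only [g, hT ξ (abs_of_nonneg hξ.1), hT (-ξ) (by rw [abs_neg, abs_of_nonneg hξ.1])]
        push_cast
        ring_nf

lemma fourierInv_triangle (ha : 0 < a) :
    𝓕⁻ (fun ξ ↦ (triangle a ξ : ℂ)) = fun t ↦ (fejer a t : ℂ) := by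
  ext v
  rw [fourierInv_triangle_eq_integral ha, fejer]
  have ha' : (a : ℂ) ≠ 0 := Complex.ofReal_ne_zero.2 ha.ne'
  rcases eq_or_ne v 0 with rfl | hv
  · simp only [Complex.ofReal_zero, mul_zero, zero_mul, neg_zero, Complex.exp_zero, sinc_zero]
    rw [intervalIntegral.integral_mul_const, intervalIntegral.integral_sub
      intervalIntegrable_const (Continuous.intervalIntegrable (by fun_prop) _ _),
      intervalIntegral.integral_div, intervalIntegral.integral_const,
      intervalIntegral.integral_ofReal, integral_id, Complex.real_smul]
    push_cast
    field_simp
    ring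
  set c : ℂ := 2 * π * v * Complex.I
  have hc0 : c ≠ 0 := by simp [c, hv, Real.pi_ne_zero]
  simp only [mul_add]
  rw [intervalIntegral.integral_add (by apply Continuous.intervalIntegrable; fun_prop)
      (by apply Continuous.intervalIntegrable; fun_prop),
    integral_one_sub_div_mul_cexp ha.ne' hc0,
    integral_one_sub_div_mul_cexp ha.ne' (neg_ne_zero.2 hc0),
    sinc_of_ne_zero (by positivity)]
  have hc2 : c ^ 2 = -(2 * π * v) ^ 2 := by simp [c, mul_pow]
  have hcos : cexp (c * a) + cexp (-c * a) = 2 - 4 * Complex.sin (π * a * v) ^ 2 := by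
    have h := Complex.cos_sq_add_sin_sq (π * a * v)
    rw [show c * a = (2 * (π * a * v)) * Complex.I by simp only [c]; ring,
      show -c * a = -(2 * (π * a * v)) * Complex.I by simp only [c]; ring,
      ← Complex.two_cos, Complex.cos_two_mul]
    linear_combination 4 * h
  rw [neg_sq, ← add_div,
    show ∀ x y : ℂ, x - 1 - c * a + (y - 1 - -c * a) = x + y - 2 by intros; ring, hcos, hc2]
  push_cast
  field_simp
  ring

@[fun_prop]
lemma continuous_fejer (a : ℝ) : Continuous (fejer a) := by
  unfold fejer
  fun_prop

lemma fejer_nonneg (ha : 0 ≤ a) (t : ℝ) : 0 ≤ fejer a t := by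
  unfold fejer; positivity

lemma fejer_le_div_one_add_sq (ha : 0 < a) (t : ℝ) :
    fejer a t ≤ (a + (a * π ^ 2)⁻¹) / (1 + t ^ 2) := by
  have hle : fejer a t ≤ a :=
    mul_le_of_le_one_right ha.le ((sq_le_one_iff_abs_le_one _).2 (abs_sinc_le_one _))
  have hdecay : fejer a t * t ^ 2 ≤ (a * π ^ 2)⁻¹ := by
    rcases eq_or_ne t 0 with rfl | ht
    · simp only [ne_eq, OfNat.ofNat_ne_zero, not_false_eq_true, zero_pow, mul_zero]; positivity
    have h : fejer a t * t ^ 2 = sin (π * a * t) ^ 2 * (a * π ^ 2)⁻¹ := by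
      rw [fejer, sinc_of_ne_zero (by positivity)]
      field_simp
    rw [h]
    exact mul_le_of_le_one_left (by positivity) (sin_sq_le_one _)
  rw [le_div_iff₀ (by positivity)]
  nlinarith

lemma integrable_fejer (ha : 0 < a) : Integrable (fun t ↦ (fejer a t : ℂ)) := by
  refine (integrable_inv_one_add_sq.const_mul (a + (a * π ^ 2)⁻¹)).mono'
    (by fun_prop : Continuous fun t ↦ (fejer a t : ℂ)).aestronglyMeasurable
    (Eventually.of_forall fun t ↦ ?_)
  rw [Complex.norm_real, norm_of_nonneg (fejer_nonneg ha.le t), ← div_eq_mul_inv]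
  exact fejer_le_div_one_add_sq ha t

lemma isBigO_fejer (ha : 0 < a) :
    (fun t ↦ (fejer a t : ℂ)) =O[cocompact ℝ] (|·| ^ (-2 : ℝ)) := by
  refine IsBigO.of_bound (a + (a * π ^ 2)⁻¹) ?_
  filter_upwards [(isCompact_singleton (x := (0 : ℝ))).compl_mem_cocompact] with t ht
  rw [Complex.norm_real, norm_of_nonneg (fejer_nonneg ha.le t), norm_of_nonneg (by positivity),
    rpow_neg (abs_nonneg t), rpow_two, sq_abs, ← div_eq_mul_inv]
  refine (fejer_le_div_one_add_sq ha t).trans (div_le_div_of_nonneg_left (by positivity) ?_ ?_)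
  · exact pow_pos (abs_pos.2 ht) 2 |>.trans_eq (sq_abs t)
  · linarith

lemma fourier_fejer (ha : 0 < a) :
    𝓕 (fun t ↦ (fejer a t : ℂ)) = fun ξ ↦ (triangle a ξ : ℂ) := by
  have heven : 𝓕 (fun ξ ↦ (triangle a ξ : ℂ)) = 𝓕⁻ (fun ξ ↦ (triangle a ξ : ℂ)) := by
    simp only [Real.fourierInv_eq_fourier_comp_neg, triangle, abs_neg]
  rw [← fourierInv_triangle ha]
  refine Continuous.fourier_fourierInv_eq (by fun_prop) (integrable_triangle ha) ?_
  rw [heven, fourierInv_triangle ha]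
  exact integrable_fejer ha

/-- By Poisson summation, since for `a ≤ 1` the Fourier transform of `fejer a` vanishes at every
nonzero integer. -/
lemma hasSum_fejer_add_int (ha : 0 < a) (ha₁ : a ≤ 1) (x : ℝ) :
    HasSum (fun n : ℤ ↦ fejer a (x + n)) 1 := by
  have hcoeff : ∀ n : ℤ, 𝓕 (fun t ↦ (fejer a t : ℂ)) n = if n = 0 then 1 else 0 := by
    intro n
    split_ifs with hn
    · simp [fourier_fejer ha, hn, triangle]
    · have hn' : a ≤ |(n : ℝ)| := ha₁.trans (by exact_mod_cast Int.one_le_abs hn)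
      simp only [fourier_fejer ha, triangle_of_le_abs ha hn', Complex.ofReal_zero]
  have hpoisson := Real.tsum_eq_tsum_fourier_of_rpow_decay_of_summable
    (f := fun t ↦ (fejer a t : ℂ)) (by fun_prop) one_lt_two (isBigO_fejer ha)
    (by simp_rw [hcoeff]; exact summable_of_ne_finset_zero (s := {0}) (by simp +contextual)) x
  simp only [hcoeff, ite_mul, one_mul, zero_mul, tsum_ite_eq, fourier_zero] at hpoisson
  have htsum : ∑' n : ℤ, fejer a (x + n) = 1 := by exact_mod_cast hpoisson
  have hsummable : Summable fun n : ℤ ↦ fejer a (x + n) := by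
    by_contra h
    rw [tsum_eq_zero_of_not_summable h] at htsum
    exact zero_ne_one htsum
  exact htsum ▸ hsummable.hasSum

lemma fejer_eq_mul_fejer_div {L : ℝ} (hL : L ≠ 0) (t : ℝ) :
    fejer a t = L * fejer (a / L) (L * t) := by
  unfold fejer
  field_simp

lemma hasSum_fejer_sub_div {L : ℝ} (ha : 0 < a) (haL : a ≤ L) (t : ℝ) :
    HasSum (fun l : ℤ ↦ fejer a (t - l / L)) L := by
  have hL : 0 < L := ha.trans_le haL
  have hshift : (fun l : ℤ ↦ fejer a (t - l / L)) =
      (fun n : ℤ ↦ L * fejer (a / L) (L * t + n)) ∘ Equiv.neg ℤ := by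
    ext l
    rw [Function.comp_apply, Equiv.neg_apply, Int.cast_neg, fejer_eq_mul_fejer_div hL.ne']
    congr 2
    field_simp
    ring
  rw [hshift, (Equiv.neg ℤ).hasSum_iff]
  simpa using (hasSum_fejer_add_int (div_pos ha hL) ((div_le_one hL).2 haL) (L * t)).mul_left L

end Fejer

lemma trapKernel_eq_mul_sinc {Leps B : ℝ} (h₁ : Leps - 1 ≠ 0) (h₂ : Leps + 1 ≠ 0) (hB : B ≠ 0)
    (t : ℝ) : trapKernel Leps B t = (Leps + 1) * B / (2 * π) *
      sinc ((Leps + 1) * B * t / 2) * sinc ((Leps - 1) * B * t / 2) := by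
  unfold trapKernel
  split_ifs with ht
  · simp [ht]
  rw [sinc_of_ne_zero (by positivity), sinc_of_ne_zero (by positivity)]
  field_simp

lemma mul_abs_sinc_mul_sinc_le {a b : ℝ} (ha : 0 < a) (hb : 0 < b) (t : ℝ) :
    a * |sinc (π * a * t) * sinc (π * b * t)| ≤ √(a / b) / 2 * (fejer a t + fejer b t) := by
  set q := √(a / b)
  have hq : 0 ≤ q := sqrt_nonneg _
  have ha' : a = q ^ 2 * b := by rw [sq_sqrt (by positivity)]; field_simp
  set x := |sinc (π * a * t)|
  set y := |sinc (π * b * t)|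
  have hfejer : ∀ c, fejer c t = c * |sinc (π * c * t)| ^ 2 := fun c ↦ by rw [fejer, sq_abs]
  rw [hfejer, hfejer, abs_mul]
  change a * (x * y) ≤ q / 2 * (a * x ^ 2 + b * y ^ 2)
  rw [ha']
  nlinarith [mul_nonneg (mul_nonneg hq hb.le) (sq_nonneg (q * x - y))]

lemma tsum_nnnorm_le_of_abs_le_of_hasSum {ι : Type*} {f g : ι → ℝ} {c : ℝ}
    (hfg : ∀ l, |f l| ≤ g l) (hg : HasSum g c) : ∑' l, (‖f l‖₊ : ℝ≥0∞) ≤ ENNReal.ofReal c := by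
  have hg₀ : ∀ l, 0 ≤ g l := fun l ↦ (abs_nonneg _).trans (hfg l)
  rw [← hg.tsum_eq, ENNReal.ofReal_tsum_of_nonneg hg₀ hg.summable]
  refine ENNReal.tsum_le_tsum fun l ↦ ?_
  rw [← enorm_eq_nnnorm, ← ofReal_norm, norm_eq_abs]
  exact ENNReal.ofReal_le_ofReal (hfg l)

lemma abs_trapKernel_pi_le {Leps : ℝ} (hLeps : 1 < Leps) (s : ℝ) :
    |trapKernel Leps π s| ≤
      √((Leps + 1) / (Leps - 1)) / 2 * (fejer ((Leps + 1) / 2) s + fejer ((Leps - 1) / 2) s) := by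
  have hcoeff : (Leps + 1) * π / (2 * π) = (Leps + 1) / 2 := by field_simp
  have harg : ∀ c, c * π * s / 2 = π * (c / 2) * s := fun c ↦ by ring
  have hratio : (Leps + 1) / (Leps - 1) = (Leps + 1) / 2 / ((Leps - 1) / 2) := by field_simp
  rw [trapKernel_eq_mul_sinc (by linarith) (by linarith) pi_ne_zero, hcoeff, harg, harg,
    mul_assoc, abs_mul, abs_of_pos (by linarith), hratio]
  exact mul_abs_sinc_mul_sinc_le (by linarith) (by linarith) s

/-- the periodization of the trapezoidal kernel is bounded by
`sqrt((L_ε + 1)/(L_ε − 1))`. -/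
theorem stmt6 (Leps L : ℝ) (hLeps : 1 < Leps) (hL : (Leps + 1) / 2 ≤ L) :
    (⨆ t : ℝ, ENNReal.ofReal (1 / L) *
        ∑' l : ℤ, (‖trapKernel Leps Real.pi (t - (l : ℝ) / L)‖₊ : ℝ≥0∞)) ≤
      ENNReal.ofReal (Real.sqrt ((Leps + 1) / (Leps - 1))) := by
  have hL₀ : 0 < L := by linarith
  refine iSup_le fun t ↦ ?_
  have hsum := ((hasSum_fejer_sub_div (by linarith) hL t).add
    (hasSum_fejer_sub_div (a := (Leps - 1) / 2) (L := L) (by linarith) (by linarith) t)).mul_left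
    (√((Leps + 1) / (Leps - 1)) / 2)
  calc ENNReal.ofReal (1 / L) * ∑' l : ℤ, (‖trapKernel Leps π (t - l / L)‖₊ : ℝ≥0∞)
      ≤ ENNReal.ofReal (1 / L) * ENNReal.ofReal (√((Leps + 1) / (Leps - 1)) / 2 * (L + L)) :=
        mul_le_mul_right
          (tsum_nnnorm_le_of_abs_le_of_hasSum (fun _ ↦ abs_trapKernel_pi_le hLeps _) hsum) _
    _ = ENNReal.ofReal √((Leps + 1) / (Leps - 1)) := by
        rw [← ENNReal.ofReal_mul (by positivity)]
        congr 1
        field_simp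
        ring
end

section
/- Let n >= 1 be a natural number and let m > 0 be a real number with 2m ∈ ℕ (so 2(n+m) is a positive integer). Set L = (n+m)/n and let g(t) = K_n(t) · Σ_{k=−n}^{n} e^{i k π t / n} be the trapezoidal kernel with L_eps = (n+1)/n and B = π. Then for every t ∈ ℝ, (1/L) Σ_{l∈ℤ} |g(t − l/L)| = (1/(2(n+m))) Σ_{l=0}^{2(n+m)−1} |Σ_{k=−n}^{n} e^{i k (π t / n − l π/(n+m))}|. -/
open MeasureTheory Real Set
open scoped ENNReal NNReal

/-! The trapezoidal kernel is `K_n(s) · D(πs/n)` with `D` the Dirichlet kernel, which is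
`2π`-periodic. Splitting `l ∈ ℤ` into residue classes mod `N = 2(n+m) = 2nL` shifts the argument
`s = t - l/L` by multiples of `2n`, which leaves `D(πs/n)` unchanged, so each class contributes
`|D(θ_r)| · Σ_q K_n(x - 2nq)`. This periodization of the triangle kernel is the constant `1/(2n)`
by the partial fraction expansion `Σ_j 1/(u+j)² = π²/sin²(πu)`. For the latter, iterating
`1/sin² x + 1/cos² x = 4/sin² 2x` gives `Σ_{j ∈ [-2^M, 2^M)} 1/s_{M+1}(u+j)² = π²/sin²(πu)` with
`s_N(x) = 2^N/π · sin(πx/2^N)`; since `s_N(x) → x`, dominated convergence (Jordan's inequality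
supplies the bound) yields the series. -/

open Filter Topology

lemma Finset.sum_Ico_consecutive' {α M : Type*} [LinearOrder α] [LocallyFiniteOrder α]
    [AddCommMonoid M] (f : α → M) {a b c : α} (hab : a ≤ b) (hbc : b ≤ c) :
    ∑ j ∈ Ico a b, f j + ∑ j ∈ Ico b c, f j = ∑ j ∈ Ico a c, f j := by
  rw [← Finset.sum_union (Finset.Ico_disjoint_Ico_consecutive a b c),
    Finset.Ico_union_Ico_eq_Ico hab hbc]

lemma Function.Periodic.sum_Ico_neg {M : Type*} [AddCommMonoid M] {f : ℤ → M} {T : ℤ}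
    (hf : Function.Periodic f (T + T)) (hT : 0 ≤ T) :
    ∑ j ∈ Finset.Ico (-T) T, f j = ∑ j ∈ Finset.Ico 0 (T + T), f j := by
  have hshift : ∑ j ∈ Finset.Ico (-T) 0, f j = ∑ j ∈ Finset.Ico T (T + T), f j := by
    have := Finset.sum_Ico_add' f (-T) 0 (T + T)
    rw [neg_add_cancel_left, zero_add] at this
    rw [← this]
    exact Finset.sum_congr rfl fun j _ => (hf j).symm
  rw [← Finset.sum_Ico_consecutive' f (by omega : -T ≤ 0) hT, hshift, add_comm,
    Finset.sum_Ico_consecutive' f hT (by omega)]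

lemma Real.inv_sin_sq_add_inv_cos_sq {x : ℝ} (h : sin (2 * x) ≠ 0) :
    (sin x ^ 2)⁻¹ + (cos x ^ 2)⁻¹ = 4 / sin (2 * x) ^ 2 := by
  rw [sin_two_mul] at h ⊢
  have hs : sin x ≠ 0 := by rintro hs; simp [hs] at h
  have hc : cos x ≠ 0 := by rintro hc; simp [hc] at h
  field_simp
  linear_combination 4 * sin_sq_add_cos_sq x

lemma Real.sin_sq_sub_int_mul_pi (x : ℝ) (q : ℤ) : sin (x - q * π) ^ 2 = sin x ^ 2 := by
  rw [sin_sub_int_mul_pi, mul_pow, ← zpow_natCast, ← zpow_mul,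
    Even.neg_one_zpow ⟨q, by push_cast; ring⟩, one_mul]

noncomputable def dyadicSin (N : ℕ) (x : ℝ) : ℝ := 2 ^ N / π * sin (π * x / 2 ^ N)

lemma dyadicSin_zero (x : ℝ) : dyadicSin 0 x = sin (π * x) / π := by
  simp [dyadicSin, div_eq_inv_mul]

lemma dyadicSin_eq_mul_sinc (N : ℕ) (x : ℝ) : dyadicSin N x = x * sinc (π * x / 2 ^ N) := by
  rcases eq_or_ne x 0 with rfl | hx
  · simp [dyadicSin]
  · rw [dyadicSin, sinc_of_ne_zero (by positivity)]
    field_simp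

lemma tendsto_dyadicSin (x : ℝ) : Tendsto (dyadicSin · x) atTop (𝓝 x) := by
  have harg : Tendsto (fun N : ℕ => π * x / 2 ^ N) atTop (𝓝 0) := by
    simpa [div_eq_mul_inv, ← inv_pow] using
      (tendsto_pow_atTop_nhds_zero_of_lt_one (by norm_num : (0:ℝ) ≤ 2⁻¹) (by norm_num)).const_mul
        (π * x)
  have := (continuous_sinc.tendsto 0).comp harg
  simpa [dyadicSin_eq_mul_sinc, sinc_zero] using this.const_mul x

lemma dyadicSin_add_two_pow (N : ℕ) (x : ℝ) : dyadicSin N (x + 2 ^ N) = -dyadicSin N x := by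
  rw [dyadicSin, dyadicSin, mul_add, add_div, mul_div_cancel_right₀ _ (by positivity), sin_add_pi]
  ring

lemma dyadicSin_ne_zero {x : ℝ} (hx : ∀ p : ℤ, x ≠ p) (N : ℕ) : dyadicSin N x ≠ 0 := by
  rw [dyadicSin, mul_ne_zero_iff]
  refine ⟨by positivity, fun h => ?_⟩
  obtain ⟨p, hp⟩ := sin_eq_zero_iff.mp h
  apply hx (p * 2 ^ N)
  field_simp at hp
  push_cast
  linarith

lemma inv_dyadicSin_succ_sq_add {x : ℝ} (N : ℕ) (hx : dyadicSin N x ≠ 0) :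
    (dyadicSin (N + 1) x ^ 2)⁻¹ + (dyadicSin (N + 1) (x + 2 ^ N) ^ 2)⁻¹ =
      (dyadicSin N x ^ 2)⁻¹ := by
  set y := π * x / 2 ^ (N + 1) with hy
  have hfirst : dyadicSin (N + 1) x = 2 ^ (N + 1) / π * sin y := rfl
  have hsecond : dyadicSin (N + 1) (x + 2 ^ N) = 2 ^ (N + 1) / π * cos y := by
    rw [dyadicSin, ← sin_add_pi_div_two]
    congr 2
    rw [hy]
    field_simp
    ring
  have hN : dyadicSin N x = 2 ^ N / π * sin (2 * y) := by
    rw [dyadicSin]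
    congr 2
    rw [hy]
    field_simp
    ring
  rw [hN, mul_ne_zero_iff] at hx
  rw [hfirst, hsecond, hN, mul_pow, mul_pow, mul_pow, mul_inv, mul_inv, ← mul_add,
    inv_sin_sq_add_inv_cos_sq hx.2]
  field_simp
  ring

lemma sum_Ico_inv_dyadicSin_sq {u : ℝ} (hu : ∀ p : ℤ, u ≠ p) (N : ℕ) :
    ∑ j ∈ Finset.Ico 0 (2 ^ N : ℤ), (dyadicSin N (u + j) ^ 2)⁻¹ = π ^ 2 / sin (π * u) ^ 2 := by
  induction N with
  | zero => simp [dyadicSin_zero, div_pow, show Finset.Ico (0 : ℤ) 1 = {0} by rfl]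
  | succ N ih =>
    have hsplit : ∑ j ∈ Finset.Ico 0 (2 ^ (N + 1) : ℤ), (dyadicSin (N + 1) (u + j) ^ 2)⁻¹ =
        ∑ j ∈ Finset.Ico 0 (2 ^ N : ℤ), ((dyadicSin (N + 1) (u + j) ^ 2)⁻¹ +
          (dyadicSin (N + 1) (u + j + 2 ^ N) ^ 2)⁻¹) := by
      have hshift := Finset.sum_Ico_add' (fun j : ℤ => (dyadicSin (N + 1) (u + j) ^ 2)⁻¹)
        0 (2 ^ N) (2 ^ N)
      rw [zero_add, ← two_mul, ← pow_succ'] at hshift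
      rw [Finset.sum_add_distrib, ← Finset.sum_Ico_consecutive' _ (by positivity)
        (pow_le_pow_right₀ (by norm_num) N.le_succ), ← hshift]
      push_cast
      simp only [add_assoc]
    rw [hsplit, ← ih]
    refine Finset.sum_congr rfl fun j _ => inv_dyadicSin_succ_sq_add N (dyadicSin_ne_zero ?_ N)
    exact fun p hp => hu (p - j) (by push_cast; linarith)

lemma sum_Ico_neg_inv_dyadicSin_sq {u : ℝ} (hu : ∀ p : ℤ, u ≠ p) (M : ℕ) :
    ∑ j ∈ Finset.Ico (-2 ^ M : ℤ) (2 ^ M), (dyadicSin (M + 1) (u + j) ^ 2)⁻¹ =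
      π ^ 2 / sin (π * u) ^ 2 := by
  have hper : Function.Periodic (fun j : ℤ => (dyadicSin (M + 1) (u + j) ^ 2)⁻¹) (2 ^ M + 2 ^ M) := by
    intro j
    rw [← two_mul, ← pow_succ']
    push_cast
    rw [← add_assoc, dyadicSin_add_two_pow, neg_sq]
  rw [hper.sum_Ico_neg (by positivity), ← two_mul, ← pow_succ', sum_Ico_inv_dyadicSin_sq hu]

lemma inv_dyadicSin_sq_le {x : ℝ} {N : ℕ} (hx : |x| ≤ 2 ^ N) :
    (dyadicSin (N + 1) x ^ 2)⁻¹ ≤ π ^ 2 / 4 * (x ^ 2)⁻¹ := by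
  rcases eq_or_ne x 0 with rfl | hx0
  · simp [dyadicSin]
  have habs : |π * x / 2 ^ (N + 1)| = π * |x| / 2 ^ (N + 1) := by
    rw [abs_div, abs_mul, abs_of_pos pi_pos, abs_of_pos (by positivity : (0:ℝ) < 2 ^ (N + 1))]
  have hjordan : 2 / π * |π * x / 2 ^ (N + 1)| ≤ |sin (π * x / 2 ^ (N + 1))| := by
    refine mul_abs_le_abs_sin ?_
    rw [habs, pow_succ, div_le_iff₀ (by positivity)]
    nlinarith [pi_pos]
  have hlow : 2 / π * |x| ≤ |dyadicSin (N + 1) x| := by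
    rw [dyadicSin, abs_mul, abs_of_pos (by positivity : (0:ℝ) < 2 ^ (N + 1) / π)]
    calc 2 / π * |x| = 2 ^ (N + 1) / π * (2 / π * |π * x / 2 ^ (N + 1)|) := by
          rw [habs]; field_simp
      _ ≤ _ := by gcongr
  calc (dyadicSin (N + 1) x ^ 2)⁻¹ = (|dyadicSin (N + 1) x| ^ 2)⁻¹ := by rw [sq_abs]
    _ ≤ ((2 / π * |x|) ^ 2)⁻¹ := by gcongr
    _ = π ^ 2 / 4 * (x ^ 2)⁻¹ := by rw [mul_pow, sq_abs]; field_simp; norm_num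

lemma summable_inv_add_int_sq (u : ℝ) : Summable fun j : ℤ => ((u + j) ^ 2)⁻¹ := by
  refine ((Real.summable_one_div_int_add_rpow u 2).mpr one_lt_two).congr fun j => ?_
  rw [Real.rpow_two, sq_abs, one_div, add_comm]

lemma hasSum_inv_add_int_sq_of_mem_Ioo {u : ℝ} (hu : u ∈ Set.Ioo 0 1) :
    HasSum (fun j : ℤ => ((u + j) ^ 2)⁻¹) (π ^ 2 / sin (π * u) ^ 2) := by
  have hint : ∀ p : ℤ, u ≠ p := by
    rintro p rfl
    have h0 : (0 : ℤ) < p := by exact_mod_cast hu.1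
    have h1 : p < 1 := by exact_mod_cast hu.2
    omega
  have hne : ∀ j : ℤ, u + j ≠ 0 := fun j h => hint (-j) (by push_cast; linarith)
  let window (M : ℕ) : Set ℤ := Finset.Ico (-2 ^ M : ℤ) (2 ^ M)
  let F (M : ℕ) : ℤ → ℝ := (window M).indicator fun j => (dyadicSin (M + 1) (u + j) ^ 2)⁻¹
  have hlim : Tendsto (fun M => ∑' j, F M j) atTop (𝓝 (∑' j : ℤ, ((u + j) ^ 2)⁻¹)) := by
    refine tendsto_tsum_of_dominated_convergence ((summable_inv_add_int_sq u).mul_left (π ^ 2 / 4))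
      (fun j => ?_) (Eventually.of_forall fun M j => ?_)
    · have hmem : ∀ᶠ M in atTop, j ∈ window M := by
        filter_upwards [eventually_ge_atTop j.natAbs] with M hM
        have : (M : ℤ) < 2 ^ M := by exact_mod_cast Nat.lt_two_pow_self
        simp only [window, Finset.coe_Ico, Set.mem_Ico]
        omega
      refine Tendsto.congr' (hmem.mono fun M hM => (Set.indicator_of_mem hM _).symm) ?_
      exact (((tendsto_dyadicSin _).comp (tendsto_add_atTop_nat 1)).pow 2).inv₀
        (pow_ne_zero 2 (hne j))
    · by_cases hj : j ∈ window M
      · simp only [F, Set.indicator_of_mem hj, norm_inv, norm_pow, Real.norm_eq_abs, sq_abs]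
        simp only [window, Finset.coe_Ico, Set.mem_Ico] at hj
        have hlo : -2 ^ M ≤ (j : ℝ) := by exact_mod_cast hj.1
        have hhi : (j : ℝ) ≤ 2 ^ M - 1 := by exact_mod_cast Int.le_sub_one_of_lt hj.2
        exact inv_dyadicSin_sq_le (abs_le.mpr ⟨by linarith [hu.1], by linarith [hu.2]⟩)
      · simp only [F, Set.indicator_of_notMem hj, norm_zero]
        positivity
  have hconst : ∀ M, ∑' j, F M j = π ^ 2 / sin (π * u) ^ 2 := fun M => by
    rw [← sum_eq_tsum_indicator, sum_Ico_neg_inv_dyadicSin_sq hint]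
  simp only [hconst, tendsto_const_nhds_iff] at hlim
  rw [hlim]
  exact (summable_inv_add_int_sq u).hasSum

theorem hasSum_inv_add_int_sq {u : ℝ} (hu : ∀ p : ℤ, u ≠ p) :
    HasSum (fun j : ℤ => ((u + j) ^ 2)⁻¹) (π ^ 2 / sin (π * u) ^ 2) := by
  have hfract : Int.fract u ∈ Set.Ioo 0 1 := ⟨Int.fract_pos.mpr (hu ⌊u⌋), Int.fract_lt_one u⟩
  have hsin : sin (π * u) ^ 2 = sin (π * Int.fract u) ^ 2 := by
    rw [Int.fract, mul_sub, mul_comm π (⌊u⌋ : ℝ), sin_sq_sub_int_mul_pi]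
  rw [hsin, ← (Equiv.subRight ⌊u⌋).hasSum_iff]
  convert hasSum_inv_add_int_sq_of_mem_Ioo hfract using 3 with j
  simp only [Function.comp_apply, Equiv.subRight_apply, Int.cast_sub, Int.fract]
  ring

lemma triKernel_nonneg (n : ℕ) (t : ℝ) : 0 ≤ triKernel n t := by
  unfold triKernel
  split_ifs <;> positivity

theorem hasSum_triKernel_sub_two_mul_int {n : ℕ} (hn : n ≠ 0) (x : ℝ) :
    HasSum (fun q : ℤ => triKernel n (x - 2 * n * q)) (1 / (2 * n)) := by
  set u := x / (2 * n) with hu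
  have hx : ∀ q : ℤ, x - 2 * n * q = 2 * n * (u - q) := fun q => by rw [hu]; field_simp
  have hsin : ∀ q : ℤ, sin (π * (2 * n * (u - q)) / (2 * n)) ^ 2 = sin (π * u) ^ 2 := fun q => by
    rw [show π * (2 * n * (u - q)) / (2 * n) = π * u - q * π by field_simp,
      sin_sq_sub_int_mul_pi]
  by_cases hint : ∃ p : ℤ, u = p
  · obtain ⟨p, hp⟩ := hint
    convert hasSum_single p fun q hq => ?_
    · simp [triKernel, hx, hp]
    · have huq : u - q ≠ 0 := fun h => hq (by exact_mod_cast (sub_eq_zero.mp h).symm.trans hp)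
      rw [triKernel, if_neg (by rw [hx]; positivity), hx, hsin, hp, mul_comm π, sin_int_mul_pi]
      simp
  · push Not at hint
    have hterm : ∀ q : ℤ, triKernel n (x - 2 * n * q) =
        sin (π * u) ^ 2 / (2 * n * π ^ 2) * ((-u + q) ^ 2)⁻¹ := fun q => by
      have huq : u - q ≠ 0 := sub_ne_zero.mpr (hint q)
      rw [triKernel, if_neg (by rw [hx]; positivity), hx, hsin,
        show (-u + q) ^ 2 = (u - q) ^ 2 by ring]
      field_simp
    have hs : sin (π * u) ≠ 0 := fun h => by
      obtain ⟨p, hp⟩ := sin_eq_zero_iff.mp h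
      exact hint p (by nlinarith [pi_pos])
    have hval : sin (π * u) ^ 2 / (2 * n * π ^ 2) * (π ^ 2 / sin (π * -u) ^ 2) = 1 / (2 * n) := by
      rw [mul_neg, sin_neg, neg_sq]
      field_simp
    simp only [hterm, ← hval]
    exact (hasSum_inv_add_int_sq fun p h => hint (-p) (by push_cast; linarith)).mul_left _

noncomputable def dirichletSum (n : ℕ) (θ : ℝ) : ℂ :=
  ∑ k ∈ Finset.Icc (-(n : ℤ)) n, Complex.exp (Complex.I * k * θ)

lemma dirichletSum_periodic (n : ℕ) : Function.Periodic (dirichletSum n) (2 * π) := fun θ => by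
  refine Finset.sum_congr rfl fun k _ => ?_
  rw [show Complex.I * k * ((θ + 2 * π : ℝ) : ℂ) = Complex.I * k * θ + k * (2 * π * Complex.I) by
    push_cast; ring, Complex.exp_add, Complex.exp_int_mul_two_pi_mul_I, mul_one]

lemma nnnorm_triKernel_mul_sum_exp (n : ℕ) (s : ℝ) :
    (‖((triKernel n s : ℝ) : ℂ) * ∑ k ∈ Finset.Icc (-(n : ℤ)) (n : ℤ),
      Complex.exp (Complex.I * (k : ℂ) * (π : ℂ) * (s : ℂ) / (n : ℂ))‖₊ : ℝ≥0∞) =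
      ENNReal.ofReal (triKernel n s) * ‖dirichletSum n (π * s / n)‖ₑ := by
  rw [← enorm_eq_nnnorm, ← ofReal_norm, norm_mul, Complex.norm_real,
    Real.norm_of_nonneg (triKernel_nonneg n s), ENNReal.ofReal_mul (triKernel_nonneg n s),
    ofReal_norm, dirichletSum]
  congr 3 with k
  push_cast
  ring_nf

lemma ENNReal.tsum_int_eq_sum_range_tsum (N : ℕ) [NeZero N] (f : ℤ → ℝ≥0∞) :
    ∑' l, f l = ∑ r ∈ Finset.range N, ∑' q : ℤ, f (q * N + r) := by
  rw [← (Int.divModEquiv N).symm.tsum_eq, ENNReal.tsum_prod', ENNReal.tsum_comm, tsum_fintype,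
    ← Fin.sum_univ_eq_sum_range (fun r => ∑' q : ℤ, f (q * N + r))]
  simp only [Int.divModEquiv_symm_apply]

theorem tsum_triKernel_mul_dirichletSum {n N : ℕ} (hn : n ≠ 0) [NeZero N] {L : ℝ}
    (hNL : (N : ℝ) = 2 * n * L) (t : ℝ) :
    ∑' l : ℤ, ENNReal.ofReal (triKernel n (t - l / L)) * ‖dirichletSum n (π * (t - l / L) / n)‖ₑ =
      ENNReal.ofReal (1 / (2 * n)) *
        ∑ r ∈ Finset.range N, ‖dirichletSum n (π * (t - r / L) / n)‖ₑ := by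
  have hL : L ≠ 0 := by
    rintro rfl
    exact NeZero.ne N (by exact_mod_cast hNL.trans (mul_zero _))
  rw [ENNReal.tsum_int_eq_sum_range_tsum N, Finset.mul_sum]
  refine Finset.sum_congr rfl fun r _ => ?_
  have harg : ∀ q : ℤ, t - ((q * N + r : ℤ) : ℝ) / L = t - r / L - 2 * n * q := fun q => by
    push_cast
    rw [hNL]
    field_simp
    ring
  have hD : ∀ q : ℤ, dirichletSum n (π * (t - r / L - 2 * n * q) / n) =
      dirichletSum n (π * (t - r / L) / n) := fun q => by
    rw [← (dirichletSum_periodic n).sub_int_mul_eq (x := π * (t - r / L) / n) q]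
    congr 1
    field_simp
  have hsum := hasSum_triKernel_sub_two_mul_int hn (t - r / L)
  simp only [harg, hD]
  rw [ENNReal.tsum_mul_right, ← ENNReal.ofReal_tsum_of_nonneg (fun q => triKernel_nonneg n _)
    hsum.summable, hsum.tsum_eq, mul_comm]

theorem stmt13_general (n : ℕ) (hn : 1 ≤ n) (m : ℝ)
    (m2 : ℕ) (hm2 : (m2 : ℝ) = 2 * m) (t : ℝ) :
    ENNReal.ofReal (1 / (((n : ℝ) + m) / (n : ℝ))) *
        ∑' l : ℤ, (‖((triKernel n (t - (l : ℝ) / (((n : ℝ) + m) / (n : ℝ))) : ℝ) : ℂ) *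
            ∑ k ∈ Finset.Icc (-(n : ℤ)) (n : ℤ),
              Complex.exp (Complex.I * (k : ℂ) * (Real.pi : ℂ) *
                ((t - (l : ℝ) / (((n : ℝ) + m) / (n : ℝ)) : ℝ) : ℂ) / (n : ℂ))‖₊ : ℝ≥0∞) =
      ENNReal.ofReal ((1 / (2 * ((n : ℝ) + m))) *
        ∑ l ∈ Finset.range (2 * n + m2),
          ‖∑ k ∈ Finset.Icc (-(n : ℤ)) (n : ℤ),
            Complex.exp (Complex.I * (k : ℂ) *
              ((Real.pi * t / (n : ℝ) - (l : ℝ) * Real.pi / ((n : ℝ) + m) : ℝ) : ℂ))‖) := by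
  have hn0 : n ≠ 0 := by omega
  have hnm : 0 < (n : ℝ) + m := by
    have : (0 : ℝ) ≤ m2 := m2.cast_nonneg
    have : (1 : ℝ) ≤ n := by exact_mod_cast hn
    linarith
  have : NeZero (2 * n + m2) := ⟨by omega⟩
  set L := ((n : ℝ) + m) / n with hL
  have hNL : ((2 * n + m2 : ℕ) : ℝ) = 2 * n * L := by
    push_cast [hm2, hL]
    field_simp
  have harg : ∀ l : ℕ, π * t / n - l * π / (n + m) = π * (t - l / L) / n := fun l => by
    rw [hL]
    field_simp
  simp only [nnnorm_triKernel_mul_sum_exp]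
  rw [tsum_triKernel_mul_dirichletSum hn0 hNL, ← mul_assoc,
    ← ENNReal.ofReal_mul (by positivity : (0 : ℝ) ≤ 1 / L),
    ENNReal.ofReal_mul (by positivity : (0 : ℝ) ≤ 1 / (2 * ((n : ℝ) + m))),
    ENNReal.ofReal_sum_of_nonneg fun _ _ => norm_nonneg _]
  congr 1
  · rw [hL]
    congr 1
    field_simp
  · refine Finset.sum_congr rfl fun l _ => ?_
    rw [ofReal_norm, ← dirichletSum, harg]

/-- the periodization of the trapezoidal kernel (triangle times Dirichlet)
collapses to a finite sum of Dirichlet-kernel magnitudes. -/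
theorem stmt13 (n : ℕ) (hn : 1 ≤ n) (m : ℝ) (hm : 0 < m)
    (m2 : ℕ) (hm2 : (m2 : ℝ) = 2 * m) (t : ℝ) :
    ENNReal.ofReal (1 / (((n : ℝ) + m) / (n : ℝ))) *
        ∑' l : ℤ, (‖((triKernel n (t - (l : ℝ) / (((n : ℝ) + m) / (n : ℝ))) : ℝ) : ℂ) *
            ∑ k ∈ Finset.Icc (-(n : ℤ)) (n : ℤ),
              Complex.exp (Complex.I * (k : ℂ) * (Real.pi : ℂ) *
                ((t - (l : ℝ) / (((n : ℝ) + m) / (n : ℝ)) : ℝ) : ℂ) / (n : ℂ))‖₊ : ℝ≥0∞) =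
      ENNReal.ofReal ((1 / (2 * ((n : ℝ) + m))) *
        ∑ l ∈ Finset.range (2 * n + m2),
          ‖∑ k ∈ Finset.Icc (-(n : ℤ)) (n : ℤ),
            Complex.exp (Complex.I * (k : ℂ) *
              ((Real.pi * t / (n : ℝ) - (l : ℝ) * Real.pi / ((n : ℝ) + m) : ℝ) : ℂ))‖) :=
  stmt13_general n hn m m2 hm2 t
end
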